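/- arXiv:math/0005047 — 6 statements merged into one kernel-verified Lean document; each statement's English description precedes it below -/
import Mathlib

section
/- Let G be a group, T an abelian subgroup of G, Γ a subgroup of the center Z(G) with Γ ⊆ T, and t ∈ T an element whose centralizer Z_G(t) equals T. If g ∈ G satisfies t g t⁻¹ g⁻¹ ∈ Γ, then g lies in the normalizer N_G(T) of T. -/
/-- Let `T` be an abelian subgroup of `G`, `Γ` a central subgroup contained in
`T`, and `t ∈ T` an element whose centralizer is exactly `T`.  If
`t g t⁻¹ g⁻¹ ∈ Γ` then `g` lies in the normalizer of `T`. -/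
theorem mem_normalizer_of_commutator_mem_central {G : Type*} [Group G]
    (T Γ : Subgroup G)
    (hT : ∀ a ∈ T, ∀ b ∈ T, a * b = b * a)
    (hΓc : Γ ≤ Subgroup.center G) (hΓT : Γ ≤ T)
    (t : G) (ht : t ∈ T) (hcent : ∀ g : G, g * t = t * g ↔ g ∈ T)
    (g : G) (hg : t * g * t⁻¹ * g⁻¹ ∈ Γ) :
    g ∈ Subgroup.normalizer (T : Set G) := by
  set γ := t * g * t⁻¹ * g⁻¹ with hγdef
  have hγcent : γ ∈ Subgroup.center G := hΓc hg
  have hγc : ∀ z : G, z * γ = γ * z := Subgroup.mem_center_iff.mp hγcent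
  have hγc' : ∀ z : G, z * γ⁻¹ = γ⁻¹ * z :=
    Subgroup.mem_center_iff.mp (Subgroup.inv_mem _ hγcent)
  have hγT : γ ∈ T := hΓT hg
  -- key identities
  have key2 : g * t = γ⁻¹ * (t * g) := by rw [hγdef]; group
  have key : g⁻¹ * t * g = γ * t := by
    have h1 : t * g = γ * (g * t) := by rw [hγdef]; group
    calc g⁻¹ * t * g = g⁻¹ * (t * g) := by group
      _ = g⁻¹ * (γ * (g * t)) := by rw [h1]
      _ = g⁻¹ * ((γ * g) * t) := by group
      _ = g⁻¹ * ((g * γ) * t) := by rw [← hγc g]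
      _ = γ * t := by group
  rw [Subgroup.mem_normalizer_iff]
  intro x
  constructor
  · intro hx
    refine (hcent _).mp ?_
    have hcomm : x * (γ * t) = (γ * t) * x := hT x hx _ (T.mul_mem hγT ht)
    calc g * x * g⁻¹ * t
        = g * (x * (g⁻¹ * t * g)) * g⁻¹ := by group
      _ = g * (x * (γ * t)) * g⁻¹ := by rw [key]
      _ = g * ((γ * t) * x) * g⁻¹ := by rw [hcomm]
      _ = g * (g⁻¹ * t * g) * x * g⁻¹ := by rw [key]; group
      _ = t * (g * x * g⁻¹) := by group
  · intro hx
    refine (hcent _).mp ?_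
    have hyt : (g * x * g⁻¹) * t = t * (g * x * g⁻¹) := hT _ hx t ht
    calc x * t
        = g⁻¹ * (g * x * g⁻¹) * (g * t) := by group
      _ = g⁻¹ * (g * x * g⁻¹) * (γ⁻¹ * (t * g)) := by rw [key2]
      _ = g⁻¹ * ((g * x * g⁻¹) * γ⁻¹) * (t * g) := by group
      _ = g⁻¹ * (γ⁻¹ * (g * x * g⁻¹)) * (t * g) := by rw [hγc' (g * x * g⁻¹)]
      _ = g⁻¹ * γ⁻¹ * ((g * x * g⁻¹) * t) * g := by group
      _ = g⁻¹ * γ⁻¹ * (t * (g * x * g⁻¹)) * g := by rw [hyt]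
      _ = g⁻¹ * γ⁻¹ * t * (g * x * g⁻¹ * g) := by group
      _ = γ⁻¹ * g⁻¹ * t * (g * x) := by rw [← hγc' g⁻¹]; group
      _ = γ⁻¹ * (g⁻¹ * t * g) * x := by group
      _ = γ⁻¹ * (γ * t) * x := by rw [key]
      _ = t * x := by group
end

section
/- Let G be a group, T an abelian subgroup of G, Γ a subgroup of the center Z(G) with Γ ⊆ T, and t ∈ T an element whose centralizer Z_G(t) equals T. Let G' = G/Γ, let π : G → G' be the quotient map, and set T' = π(T), t' = π(t). Then the centralizer G'_{t'} of t' in G' is contained in the normalizer N_{G'}(T'), T' is a normal subgroup of G'_{t'}, and consequently the quotient G'_{t'}/T' embeds into N_{G'}(T')/T'. -/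
/-- Let `T` be an abelian subgroup of `G`, `Γ` a central subgroup with
`Γ ⊆ T`, and `t ∈ T` an element whose centralizer in `G` is exactly `T`.
Let `G' = G/Γ`, `π : G → G'` the quotient map, `T' = π(T)`, `t' = π(t)`.
Then the centralizer of `t'` in `G'` is contained in the normalizer of `T'`,
`T'` is normal in the centralizer of `t'`, and the quotient
`G'_{t'}/T'` embeds into `N_{G'}(T')/T'`. -/
theorem centralizer_in_quotient_le_normalizer {G : Type*} [Group G]
    (T Γ : Subgroup G) [Γ.Normal]
    (hT : ∀ a ∈ T, ∀ b ∈ T, a * b = b * a)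
    (hΓc : Γ ≤ Subgroup.center G) (hΓT : Γ ≤ T)
    (t : G) (ht : t ∈ T) (hcent : ∀ g : G, g * t = t * g ↔ g ∈ T) :
    ∃ hle : Subgroup.centralizer {((QuotientGroup.mk' Γ) t)} ≤
        Subgroup.normalizer ((T.map (QuotientGroup.mk' Γ) : Subgroup (G ⧸ Γ)) : Set (G ⧸ Γ)),
      ((T.map (QuotientGroup.mk' Γ)).subgroupOf
          (Subgroup.centralizer {((QuotientGroup.mk' Γ) t)})).Normal ∧
      ∃ f : (Subgroup.centralizer {((QuotientGroup.mk' Γ) t)} ⧸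
              (T.map (QuotientGroup.mk' Γ)).subgroupOf
                (Subgroup.centralizer {((QuotientGroup.mk' Γ) t)})) →
            (Subgroup.normalizer ((T.map (QuotientGroup.mk' Γ) : Subgroup (G ⧸ Γ)) : Set (G ⧸ Γ)) ⧸
              (T.map (QuotientGroup.mk' Γ)).subgroupOf
                (Subgroup.normalizer ((T.map (QuotientGroup.mk' Γ) : Subgroup (G ⧸ Γ)) : Set (G ⧸ Γ)))),
        Function.Injective f ∧
        ∀ c, f (QuotientGroup.mk c) = QuotientGroup.mk (Subgroup.inclusion hle c) := by
  set π := QuotientGroup.mk' Γ with hπ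
  set T' := T.map π with hT'
  -- membership transfer
  have hTmem : ∀ u : G, π u ∈ T' ↔ u ∈ T := by
    intro u
    constructor
    · rintro ⟨s, hs, heq⟩
      have : s⁻¹ * u ∈ Γ := by
        have := (QuotientGroup.eq (s := Γ)).mp heq
        simpa using this
      have : s * (s⁻¹ * u) ∈ T := T.mul_mem hs (hΓT this)
      simpa using this
    · exact fun h => ⟨u, h, rfl⟩
  -- key conjugation lemma
  have key : ∀ g : G, π g ∈ Subgroup.centralizer {π t} → ∀ s ∈ T, g * s * g⁻¹ ∈ T := by
    intro g hg s hs
    have hcomm : π g * π t = π t * π g := by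
      have := Subgroup.mem_centralizer_iff.mp hg
      exact (this (π t) rfl).symm
    have : π (g * t) = π (t * g) := by simpa using hcomm
    have hγ : (g * t)⁻¹ * (t * g) ∈ Γ := by
      have := (QuotientGroup.eq (s := Γ)).mp this
      simpa using this
    set γ := (g * t)⁻¹ * (t * g) with hγdef
    have hγc : ∀ x : G, γ * x = x * γ := fun x =>
      (Subgroup.mem_center_iff.mp (hΓc hγ) x).symm
    have hrel : t * g = g * t * γ := by
      rw [hγdef]; group
    have hst : s * t = t * s := hT s hs t ht
    have hab : (g*t*g⁻¹) * (g*s*g⁻¹) = (g*s*g⁻¹) * (g*t*g⁻¹) := by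
      calc (g*t*g⁻¹)*(g*s*g⁻¹) = g*(t*s)*g⁻¹ := by group
        _ = g*(s*t)*g⁻¹ := by rw [hst]
        _ = (g*s*g⁻¹)*(g*t*g⁻¹) := by group
    have ht2 : t = (g*t*g⁻¹) * γ := by
      calc t = (t*g)*g⁻¹ := by group
        _ = (g*t*γ)*g⁻¹ := by rw [hrel]
        _ = g*t*(γ*g⁻¹) := by group
        _ = g*t*(g⁻¹*γ) := by rw [hγc]
        _ = (g*t*g⁻¹)*γ := by group
    have : (g * s * g⁻¹) * t = t * (g * s * g⁻¹) := by
      calc (g*s*g⁻¹)*t = (g*s*g⁻¹)*((g*t*g⁻¹)*γ) := by rw [← ht2]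
        _ = ((g*s*g⁻¹)*(g*t*g⁻¹))*γ := by group
        _ = ((g*t*g⁻¹)*(g*s*g⁻¹))*γ := by rw [hab]
        _ = (g*t*g⁻¹)*((g*s*g⁻¹)*γ) := by group
        _ = (g*t*g⁻¹)*(γ*(g*s*g⁻¹)) := by rw [hγc]
        _ = ((g*t*g⁻¹)*γ)*(g*s*g⁻¹) := by group
        _ = t*(g*s*g⁻¹) := by rw [← ht2]
    exact (hcent _).mp this
  have hle : Subgroup.centralizer {π t} ≤ Subgroup.normalizer (T' : Set (G ⧸ Γ)) := by
    intro x hx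
    obtain ⟨g, rfl⟩ := QuotientGroup.mk'_surjective Γ x
    rw [Subgroup.mem_normalizer_iff]
    intro h
    obtain ⟨u, rfl⟩ := QuotientGroup.mk'_surjective Γ h
    have h1 : π g * π u * (π g)⁻¹ = π (g * u * g⁻¹) := by simp
    rw [h1, hTmem, hTmem]
    constructor
    · exact fun hu => key g hx u hu
    · intro hu
      have hxinv : π g⁻¹ ∈ Subgroup.centralizer {π t} := by
        have := (Subgroup.centralizer {π t}).inv_mem hx
        rw [map_inv]; exact this
      have := key g⁻¹ hxinv _ hu
      simpa [mul_assoc] using this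
  refine ⟨hle, ?_, ?_⟩
  · constructor
    rintro n hn g
    have hn' : (n : G ⧸ Γ) ∈ T' := hn
    have hg' : (g : G ⧸ Γ) ∈ Subgroup.normalizer (T' : Set (G ⧸ Γ)) := hle g.2
    have : (g : G ⧸ Γ) * n * (g : G ⧸ Γ)⁻¹ ∈ T' :=
      (Subgroup.mem_normalizer_iff.mp hg' n).mp hn'
    simpa [Subgroup.mem_subgroupOf] using this
  · haveI : ((T.map π).subgroupOf (Subgroup.normalizer ((T.map π : Subgroup (G ⧸ Γ)) : Set (G ⧸ Γ)))).Normal :=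
      Subgroup.normal_in_normalizer
    haveI hnorm : ((T.map π).subgroupOf (Subgroup.centralizer {π t})).Normal := by
      constructor
      rintro n hn g
      have hn' : (n : G ⧸ Γ) ∈ T' := hn
      have hg' : (g : G ⧸ Γ) ∈ Subgroup.normalizer (T' : Set (G ⧸ Γ)) := hle g.2
      have : (g : G ⧸ Γ) * n * (g : G ⧸ Γ)⁻¹ ∈ T' :=
        (Subgroup.mem_normalizer_iff.mp hg' n).mp hn'
      simpa [Subgroup.mem_subgroupOf, -Subgroup.mem_map] using this
    refine ⟨QuotientGroup.map _ _ (Subgroup.inclusion hle) ?_, ?_, ?_⟩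
    · intro c hc
      simpa [Subgroup.mem_subgroupOf] using hc
    · intro a b
      induction a using QuotientGroup.induction_on with
      | H a =>
      induction b using QuotientGroup.induction_on with
      | H b =>
      intro hab
      rw [QuotientGroup.map_mk, QuotientGroup.map_mk] at hab
      rw [QuotientGroup.eq] at hab ⊢
      simpa [Subgroup.mem_subgroupOf] using hab
    · intro c
      simp [QuotientGroup.map_mk]
end

section
/- Let R be a (possibly noncommutative) ring in which 2 is invertible, and let a, b be commuting units of R. Define c₁₁ = ½(b − b⁻¹), c₁₂ = ½(−1 + b + a⁻¹ + b a⁻¹), c₂₁ = ½(1 − a − b⁻¹ − a b⁻¹), c₂₂ = ½(a⁻¹ − a). Then c₁₁ c₂₂ − c₁₂ c₂₁ = 1. -/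
/-- Let `R` be a ring in which `2` is invertible, and `a, b` commuting units of
`R`.  With `c₁₁ = ½(b − b⁻¹)`, `c₁₂ = ½(−1 + b + a⁻¹ + b a⁻¹)`,
`c₂₁ = ½(1 − a − b⁻¹ − a b⁻¹)`, `c₂₂ = ½(a⁻¹ − a)` one has
`c₁₁ c₂₂ − c₁₂ c₂₁ = 1`. -/
theorem symplectic_block_identity {R : Type*} [Ring R] [Invertible (2 : R)]
    (a b : Rˣ) (hab : (a : R) * b = (b : R) * a)
    (c₁₁ c₁₂ c₂₁ c₂₂ : R)
    (h₁₁ : c₁₁ = ⅟2 * ((b : R) - (↑b⁻¹ : R)))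
    (h₁₂ : c₁₂ = ⅟2 * (-1 + (b : R) + (↑a⁻¹ : R) + (b : R) * (↑a⁻¹ : R)))
    (h₂₁ : c₂₁ = ⅟2 * (1 - (a : R) - (↑b⁻¹ : R) - (a : R) * (↑b⁻¹ : R)))
    (h₂₂ : c₂₂ = ⅟2 * ((↑a⁻¹ : R) - (a : R))) :
    c₁₁ * c₂₂ - c₁₂ * c₂₁ = 1 := by
  subst h₁₁ h₁₂ h₂₁ h₂₂
  have cab : Commute (a : R) (b : R) := hab
  have c1 : Commute (a : R) (↑b⁻¹ : R) := cab.units_inv_right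
  have c2 : Commute (↑a⁻¹ : R) (b : R) := cab.units_inv_left
  have c3 : Commute (↑a⁻¹ : R) (↑b⁻¹ : R) := c2.units_inv_right
  have h2 : ∀ x : R, Commute (⅟(2:R)) x := fun x =>
    (Commute.invOf_left (by simp [Commute, SemiconjBy, two_mul, mul_two]))
  have key : ((b : R) - ↑b⁻¹) * ((↑a⁻¹ : R) - a)
      - (-1 + (b : R) + ↑a⁻¹ + (b : R) * ↑a⁻¹) * (1 - (a : R) - ↑b⁻¹ - (a : R) * ↑b⁻¹)
      = 4 := by
    have e1 : (b : R) * a = a * b := hab.symm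
    have e2 : (b : R) * ↑a⁻¹ = ↑a⁻¹ * b := c2.symm.eq
    have e3 : (↑b⁻¹ : R) * a = a * ↑b⁻¹ := c1.symm.eq
    have e4 : (↑b⁻¹ : R) * ↑a⁻¹ = ↑a⁻¹ * ↑b⁻¹ := c3.symm.eq
    have f1 : ∀ z : R, (b : R) * (a * z) = a * (b * z) := fun z => by
      rw [← mul_assoc, e1, mul_assoc]
    have f2 : ∀ z : R, (b : R) * (↑a⁻¹ * z) = ↑a⁻¹ * (b * z) := fun z => by
      rw [← mul_assoc, e2, mul_assoc]
    have f3 : ∀ z : R, (↑b⁻¹ : R) * (a * z) = a * (↑b⁻¹ * z) := fun z => by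
      rw [← mul_assoc, e3, mul_assoc]
    have f4 : ∀ z : R, (↑b⁻¹ : R) * (↑a⁻¹ * z) = ↑a⁻¹ * (↑b⁻¹ * z) := fun z => by
      rw [← mul_assoc, e4, mul_assoc]
    have g1 : (a : R) * ↑a⁻¹ = 1 := a.mul_inv
    have g2 : (↑a⁻¹ : R) * a = 1 := a.inv_mul
    have g3 : (b : R) * ↑b⁻¹ = 1 := b.mul_inv
    have g4 : (↑b⁻¹ : R) * b = 1 := b.inv_mul
    have g1' : ∀ z : R, (a : R) * (↑a⁻¹ * z) = z := fun z => by rw [← mul_assoc, g1, one_mul]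
    have g2' : ∀ z : R, (↑a⁻¹ : R) * (a * z) = z := fun z => by rw [← mul_assoc, g2, one_mul]
    have g3' : ∀ z : R, (b : R) * (↑b⁻¹ * z) = z := fun z => by rw [← mul_assoc, g3, one_mul]
    have g4' : ∀ z : R, (↑b⁻¹ : R) * (b * z) = z := fun z => by rw [← mul_assoc, g4, one_mul]
    noncomm_ring
    simp only [mul_assoc, e1, e2, e3, e4, f1, f2, f3, f4, g1, g2, g3, g4, g1', g2', g3', g4']
    noncomm_ring
    simp
  calc ⅟2 * ((b : R) - ↑b⁻¹) * (⅟2 * ((↑a⁻¹ : R) - a))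
      - ⅟2 * (-1 + (b : R) + ↑a⁻¹ + (b : R) * ↑a⁻¹) * (⅟2 * (1 - (a : R) - ↑b⁻¹ - (a : R) * ↑b⁻¹))
      = ⅟2 * ⅟2 * (((b : R) - ↑b⁻¹) * ((↑a⁻¹ : R) - a)
        - (-1 + (b : R) + ↑a⁻¹ + (b : R) * ↑a⁻¹) * (1 - (a : R) - ↑b⁻¹ - (a : R) * ↑b⁻¹)) := by
        have hmov : ∀ x z : R, x * (⅟(2:R) * z) = ⅟2 * (x * z) := fun x z => by
          rw [← mul_assoc, ← (h2 x).eq, mul_assoc]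
        have hmov2 : ∀ x : R, x * ⅟(2:R) = ⅟2 * x := fun x => ((h2 x).eq).symm
        noncomm_ring
        simp only [hmov, hmov2]
        abel
    _ = ⅟2 * ⅟2 * 4 := by rw [key]
    _ = 1 := by
        have : (4 : R) = 2 * 2 := by norm_num
        rw [this, mul_assoc, ← mul_assoc (⅟(2:R)) 2, invOf_mul_self, one_mul, invOf_mul_self]
end

section
/- Let A, B be commuting invertible n × n real matrices. Define the n × n matrices C₁₁ = ½(B − B⁻¹), C₁₂ = ½(−1 + B + A⁻¹ + B A⁻¹), C₂₁ = ½(1 − A − B⁻¹ − A B⁻¹), C₂₂ = ½(A⁻¹ − A). Then the 2n × 2n block matrix with blocks C₁₁, C₁₂, C₂₁, C₂₂ has determinant 1. -/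
open Matrix Polynomial

/-- Determinant of a 2×2 block matrix with commuting lower blocks. -/
lemma det_fromBlocks_of_comm' {n : ℕ} (A B C D : Matrix (Fin n) (Fin n) ℝ)
    (h : C * D = D * C) :
    (Matrix.fromBlocks A B C D).det = (A * D - B * C).det := by
  classical
  set M₁ : Matrix (Fin n ⊕ Fin n) (Fin n ⊕ Fin n) ℝ[X] :=
    Matrix.fromBlocks (A.map Polynomial.C) (B.map Polynomial.C) (C.map Polynomial.C)
      (D.map Polynomial.C + Matrix.diagonal fun _ => X) with hM₁
  set M₂ : Matrix (Fin n) (Fin n) ℝ[X] :=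
    (A * D - B * C).map Polynomial.C + (Matrix.diagonal fun _ => (X : ℝ[X])) * A.map Polynomial.C
    with hM₂
  have hmap1 : ∀ t : ℝ, M₁.map (eval t) =
      Matrix.fromBlocks A B C (D + Matrix.diagonal fun _ => t) := by
    intro t
    ext (i | i) (j | j) <;>
      simp [hM₁, Matrix.map_apply, Matrix.diagonal, Matrix.of_apply, apply_ite (eval t)]
  have hmap2 : ∀ t : ℝ, M₂.map (eval t) =
      (A * D - B * C) + (Matrix.diagonal fun _ => t) * A := by
    intro t
    ext i j
    simp [hM₂, Matrix.map_apply, Matrix.mul_apply, Matrix.diagonal, Matrix.of_apply,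
      apply_ite (eval t), Polynomial.eval_finset_sum]
    ring
  have hdiag : ∀ (t : ℝ) (M : Matrix (Fin n) (Fin n) ℝ),
      (Matrix.diagonal fun _ => t) * M = M * Matrix.diagonal fun _ => t := by
    intro t M
    rw [← Matrix.smul_eq_diagonal_mul, ← Matrix.smul_eq_mul_diagonal]
  have hcommt : ∀ t : ℝ, C * (D + Matrix.diagonal fun _ => t)
      = (D + Matrix.diagonal fun _ => t) * C := by
    intro t
    rw [mul_add, add_mul, h, hdiag t C]
  have key : ∀ t : ℝ, IsUnit (D + Matrix.diagonal fun _ => t).det →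
      eval t M₁.det = eval t M₂.det := by
    intro t hu
    set Dt : Matrix (Fin n) (Fin n) ℝ := D + Matrix.diagonal fun _ => t with hDt
    haveI : Invertible Dt := Matrix.invertibleOfIsUnitDet _ hu
    have e1 : eval t M₁.det = (Matrix.fromBlocks A B C Dt).det := by
      have := (evalRingHom t).map_det M₁
      simpa [hmap1 t] using this
    have e2 : eval t M₂.det = (A * Dt - B * C).det := by
      have := (evalRingHom t).map_det M₂
      rw [RingHom.mapMatrix_apply, coe_evalRingHom] at this
      rw [this, hmap2 t]
      congr 1
      rw [hDt, mul_add, hdiag t A]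
      abel
    have e3 : (A - B * ⅟Dt * C) * Dt = A * Dt - B * C := by
      have : B * ⅟Dt * C * Dt = B * C := by
        rw [mul_assoc (B * ⅟Dt), hcommt t, ← hDt, ← mul_assoc, mul_assoc B, invOf_mul_self,
          mul_one]
      rw [sub_mul, this]
    rw [e1, e2, Matrix.det_fromBlocks₂₂, mul_comm, ← Matrix.det_mul, e3]
  set r : ℝ[X] := (D.map Polynomial.C + Matrix.diagonal fun _ => X).det with hr
  have hrcp : r = (-D).charpoly := by
    rw [hr, Matrix.charpoly]
    congr 1
    ext i j
    by_cases hij : i = j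
    · subst hij
      simp [charmatrix_apply_eq, Matrix.map_apply]
      ring
    · simp [charmatrix_apply_ne _ _ _ hij, Matrix.map_apply, Matrix.diagonal_apply_ne _ hij]
  have hrne : r ≠ 0 := by rw [hrcp]; exact (Matrix.charpoly_monic _).ne_zero
  have heval : ∀ t : ℝ, eval t r = (D + Matrix.diagonal fun _ => t).det := by
    intro t
    have := (evalRingHom t).map_det (D.map Polynomial.C + Matrix.diagonal fun _ => X)
    rw [RingHom.mapMatrix_apply, coe_evalRingHom] at this
    rw [hr, this]
    congr 1
    ext i j
    by_cases hij : i = j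
    · subst hij; simp [Matrix.map_apply]
    · simp [Matrix.map_apply, Matrix.diagonal_apply_ne _ hij]
  have hPQ : M₁.det = M₂.det := by
    have h0 : M₁.det - M₂.det = 0 := by
      apply Polynomial.eq_zero_of_infinite_isRoot
      apply Set.Infinite.mono (s := {t : ℝ | ¬ r.IsRoot t})
      · intro t ht
        simp only [Set.mem_setOf_eq, IsRoot, eval_sub, sub_eq_zero]
        apply key
        rw [← heval t]
        exact isUnit_iff_ne_zero.mpr ht
      · have := (Polynomial.finite_setOf_isRoot hrne).infinite_compl
        simpa [Set.compl_setOf] using this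
    exact sub_eq_zero.mp h0
  have f1 : (Matrix.fromBlocks A B C D).det = eval 0 M₁.det := by
    have := (evalRingHom 0).map_det M₁
    rw [RingHom.mapMatrix_apply, coe_evalRingHom] at this
    rw [this, hmap1 0]
    congr 1
    simp
  have f2 : eval 0 M₂.det = (A * D - B * C).det := by
    have := (evalRingHom 0).map_det M₂
    rw [RingHom.mapMatrix_apply, coe_evalRingHom] at this
    rw [this, hmap2 0]
    congr 1
    simp
  rw [f1, hPQ, f2]


lemma ring_blocks_aux {R : Type*} [Ring R] (a b ai bi : R)
    (hab : a * b = b * a) (ha1 : a * ai = 1) (ha2 : ai * a = 1)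
    (hb1 : b * bi = 1) (hb2 : bi * b = 1) :
    (1 - a - bi - a * bi) * (ai - a) = (ai - a) * (1 - a - bi - a * bi) ∧
    (b - bi) * (ai - a) - (-1 + b + ai + b * ai) * (1 - a - bi - a * bi) = 4 := by
  have hcab : Commute a b := hab
  let ua : Rˣ := ⟨a, ai, ha1, ha2⟩
  let ub : Rˣ := ⟨b, bi, hb1, hb2⟩
  have h1 : Commute a bi := Commute.units_inv_right (u := ub) hcab
  have h2 : Commute ai b := (Commute.units_inv_right (u := ua) hcab.symm).symm
  have h3 : Commute ai bi := Commute.units_inv_right (u := ub) h2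
  have h4 : Commute a ai := ha1.trans ha2.symm
  have h5 : Commute b bi := hb1.trans hb2.symm
  set s : Set R := {a, b, ai, bi} with hs
  have hcomm : ∀ x ∈ s, ∀ y ∈ s, x * y = y * x := by
    intro x hx y hy
    simp only [hs, Set.mem_insert_iff, Set.mem_singleton_iff] at hx hy
    rcases hx with rfl | rfl | rfl | rfl <;> rcases hy with rfl | rfl | rfl | rfl <;>
      first
        | rfl
        | exact hab | exact hab.symm | exact h1 | exact h1.symm
        | exact h2 | exact h2.symm | exact h3 | exact h3.symm
        | exact h4 | exact h4.symm | exact h5 | exact h5.symm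
  letI : CommRing (Subring.closure s) := Subring.closureCommRingOfComm hcomm
  have ma : a ∈ Subring.closure s := Subring.subset_closure (by simp [hs])
  have mb : b ∈ Subring.closure s := Subring.subset_closure (by simp [hs])
  have mai : ai ∈ Subring.closure s := Subring.subset_closure (by simp [hs])
  have mbi : bi ∈ Subring.closure s := Subring.subset_closure (by simp [hs])
  set A : Subring.closure s := ⟨a, ma⟩ with hA
  set B : Subring.closure s := ⟨b, mb⟩ with hB
  set AI : Subring.closure s := ⟨ai, mai⟩ with hAI
  set BI : Subring.closure s := ⟨bi, mbi⟩ with hBI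
  have e1 : A * AI = 1 := Subtype.ext ha1
  have e2 : B * BI = 1 := Subtype.ext hb1
  have comm' : (1 - A - BI - A * BI) * (AI - A) = (AI - A) * (1 - A - BI - A * BI) :=
    mul_comm _ _
  have main : (B - BI) * (AI - A) - (-1 + B + AI + B * AI) * (1 - A - BI - A * BI) = 4 := by
    linear_combination (B * BI + 1 + B + BI) * e1 + (2 + A + AI) * e2
  constructor
  · have d := congrArg ((Subring.closure s).subtype) comm'
    simp only [_root_.map_mul, _root_.map_sub, _root_.map_add, _root_.map_one, _root_.map_neg] at d
    exact d
  · have d := congrArg ((Subring.closure s).subtype) main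
    simp only [_root_.map_mul, _root_.map_sub, _root_.map_add, _root_.map_one, _root_.map_neg, _root_.map_ofNat] at d
    exact d


/-- Let `A, B` be commuting invertible `n × n` real matrices and
`C₁₁ = ½(B − B⁻¹)`, `C₁₂ = ½(−1 + B + A⁻¹ + B A⁻¹)`,
`C₂₁ = ½(1 − A − B⁻¹ − A B⁻¹)`, `C₂₂ = ½(A⁻¹ − A)`.  Then the `2n × 2n`
block matrix `[[C₁₁, C₁₂],[C₂₁, C₂₂]]` has determinant `1`. -/
theorem det_symplectic_block_matrix_eq_one {n : ℕ}
    (A B : Matrix (Fin n) (Fin n) ℝ) (hA : IsUnit A) (hB : IsUnit B)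
    (hAB : A * B = B * A) :
    (Matrix.fromBlocks
      ((1 / 2 : ℝ) • (B - B⁻¹))
      ((1 / 2 : ℝ) • (-1 + B + A⁻¹ + B * A⁻¹))
      ((1 / 2 : ℝ) • (1 - A - B⁻¹ - A * B⁻¹))
      ((1 / 2 : ℝ) • (A⁻¹ - A))).det = 1 := by

  have hAd : IsUnit A.det := (Matrix.isUnit_iff_isUnit_det A).mp hA
  have hBd : IsUnit B.det := (Matrix.isUnit_iff_isUnit_det B).mp hB
  have ha1 : A * A⁻¹ = 1 := Matrix.mul_nonsing_inv A hAd
  have ha2 : A⁻¹ * A = 1 := Matrix.nonsing_inv_mul A hAd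
  have hb1 : B * B⁻¹ = 1 := Matrix.mul_nonsing_inv B hBd
  have hb2 : B⁻¹ * B = 1 := Matrix.nonsing_inv_mul B hBd
  obtain ⟨hcm, hmain⟩ := ring_blocks_aux A B A⁻¹ B⁻¹ hAB ha1 ha2 hb1 hb2
  have hsc : ((1 / 2 : ℝ) • (1 - A - B⁻¹ - A * B⁻¹)) * ((1 / 2 : ℝ) • (A⁻¹ - A))
      = ((1 / 2 : ℝ) • (A⁻¹ - A)) * ((1 / 2 : ℝ) • (1 - A - B⁻¹ - A * B⁻¹)) := by
    simp only [Matrix.smul_mul, Matrix.mul_smul, hcm]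
  rw [det_fromBlocks_of_comm' _ _ _ _ hsc]
  have key : ((1 / 2 : ℝ) • (B - B⁻¹)) * ((1 / 2 : ℝ) • (A⁻¹ - A))
      - ((1 / 2 : ℝ) • (-1 + B + A⁻¹ + B * A⁻¹)) * ((1 / 2 : ℝ) • (1 - A - B⁻¹ - A * B⁻¹))
      = 1 := by
    have e : ((1 / 2 : ℝ) • (B - B⁻¹)) * ((1 / 2 : ℝ) • (A⁻¹ - A))
        - ((1 / 2 : ℝ) • (-1 + B + A⁻¹ + B * A⁻¹)) * ((1 / 2 : ℝ) • (1 - A - B⁻¹ - A * B⁻¹))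
        = ((1 / 4 : ℝ)) • ((B - B⁻¹) * (A⁻¹ - A)
            - (-1 + B + A⁻¹ + B * A⁻¹) * (1 - A - B⁻¹ - A * B⁻¹)) := by
      simp only [Matrix.smul_mul, Matrix.mul_smul, smul_smul]
      rw [smul_sub]
      norm_num
    rw [e, hmain]
    have h4 : (4 : Matrix (Fin n) (Fin n) ℝ) = (4 : ℝ) • (1 : Matrix (Fin n) (Fin n) ℝ) := by
      rw [Algebra.smul_def, mul_one]
      exact (map_ofNat _ 4).symm
    rw [h4, smul_smul]
    norm_num
  rw [key, Matrix.det_one]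
end

section
/- Let E be an n-dimensional real inner product space, and let L ⊆ E be a full-rank ℤ-lattice (a discrete subgroup spanning E) with dual lattice L* = {x ∈ E : ⟪x,y⟫ ∈ ℤ for all y ∈ L}. Assume L ⊆ L* (i.e., the inner product is integer-valued on L). Then for every positive integer l, the quotient group ((1/l)·L*)/L is finite and its cardinality equals lⁿ · v², where v is the covolume of L (the volume of a fundamental domain of L with respect to the Lebesgue measure determined by the inner product). -/
open scoped RealInnerProductSpace

/-- The scaled dual lattice `(1/l)·L* = {x : l·⟪x,y⟫ ∈ ℤ for all y ∈ L}` of a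
`ℤ`-submodule `L` of Euclidean space, where `L* = {x : ⟪x,y⟫ ∈ ℤ ∀ y ∈ L}` is
the dual lattice. -/
noncomputable def scaledDualLattice {n : ℕ}
    (L : Submodule ℤ (EuclideanSpace ℝ (Fin n))) (l : ℕ) :
    Submodule ℤ (EuclideanSpace ℝ (Fin n)) where
  carrier := {x | ∀ y ∈ L, ∃ m : ℤ, (l : ℝ) * ⟪x, y⟫ = (m : ℝ)}
  zero_mem' := fun y _ => ⟨0, by simp⟩
  add_mem' := by
    intro x x' hx hx' y hy
    obtain ⟨m, hm⟩ := hx y hy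
    obtain ⟨m', hm'⟩ := hx' y hy
    exact ⟨m + m', by rw [inner_add_left, mul_add, hm, hm']; push_cast; ring⟩
  smul_mem' := by
    intro c x hx y hy
    obtain ⟨m, hm⟩ := hx y hy
    refine ⟨c * m, ?_⟩
    rw [← Int.cast_smul_eq_zsmul ℝ c x, real_inner_smul_left, ← mul_assoc,
      mul_comm ((l : ℝ)) ((c : ℤ) : ℝ), mul_assoc, hm]
    push_cast; ring

open Module

attribute [local instance 2000] Submodule.module

/-- The cardinality of the quotient of a free `ℤ`-module by a full-rank submodule equals
the absolute value of the determinant of a basis of the submodule relative to a basis of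
the ambient module. -/
lemma natCard_quotient_eq_natAbs_det {ι M : Type*} [Fintype ι] [DecidableEq ι]
    [AddCommGroup M] [Module ℤ M] (bM : Basis ι ℤ M) (N : Submodule ℤ M)
    (bN : Basis ι ℤ N) :
    Nat.card (M ⧸ N) = (bM.det ((↑) ∘ bN)).natAbs := by
  obtain ⟨m, snf⟩ := N.smithNormalForm bM
  obtain ⟨bM', bN', f, a, ha⟩ := snf
  have hm : m = Fintype.card ι := by
    have := Basis.indexEquiv bN' bN
    simpa using Fintype.card_congr this
  have hf : Function.Bijective f :=
    (Fintype.bijective_iff_injective_and_card f).2 ⟨f.injective, by simp [hm]⟩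
  let e' : Fin m ≃ ι := Equiv.ofBijective f hf
  -- index computation
  have hidx : Nat.card (M ⧸ N) = ∏ i, (a i).natAbs := by
    have h2 := (Basis.SmithNormalForm.mk bM' bN' f a ha).toAddSubgroup_index_eq_pow_mul_prod
    have h0 : Nat.card (M ⧸ N) = N.toAddSubgroup.index := rfl
    have h3 : Fintype.card ι - m = 0 := by omega
    rw [h0, h2, h3, pow_zero, one_mul]
    refine Finset.prod_congr rfl fun i _ => ?_
    rw [Ideal.span_singleton_toAddSubgroup_eq_zmultiples, Int.index_zmultiples]
  -- determinant computation
  have hdet1 : bM.det ((↑) ∘ bN)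
      = LinearMap.det (N.subtype ∘ₗ (bM.equiv bN (Equiv.refl ι) : M →ₗ[ℤ] N)) :=
    Basis.det_comp_basis bN bM N.subtype
  set e₂ : M ≃ₗ[ℤ] N := bM'.equiv (bN'.reindex e') (Equiv.refl ι) with he₂
  have hassoc := LinearMap.associated_det_comp_equiv N.subtype
    (bM.equiv bN (Equiv.refl ι)) e₂
  have hf3 : ∀ j, f (e'.symm j) = j := fun j => e'.apply_symm_apply j
  have hdiag : ∀ i, (N.subtype ∘ₗ (e₂ : M →ₗ[ℤ] N)) (bM' i) = (bN' (e'.symm i) : M) := by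
    intro i
    have h1 : e₂ (bM' i) = (bN'.reindex e') i := bM'.equiv_apply i _ _
    have h2 : ((bN'.reindex e') i : M) = (bN' (e'.symm i) : M) := by
      rw [Module.Basis.reindex_apply]
    simp only [LinearMap.comp_apply, LinearEquiv.coe_coe, Submodule.coe_subtype, h1, h2]
  have hdet2 : LinearMap.det (N.subtype ∘ₗ (e₂ : M →ₗ[ℤ] N)) = ∏ i, a i := by
    rw [← LinearMap.det_toMatrix bM']
    have : LinearMap.toMatrix bM' bM' (N.subtype ∘ₗ (e₂ : M →ₗ[ℤ] N))
        = Matrix.diagonal (a ∘ e'.symm) := by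
      ext i j
      rw [LinearMap.toMatrix_apply, hdiag, ha (e'.symm j), hf3, LinearEquiv.map_smul,
        Basis.repr_self, Finsupp.smul_single, smul_eq_mul, mul_one]
      by_cases h : i = j
      · subst h; simp
      · simp [Matrix.diagonal_apply_ne _ h, Finsupp.single_eq_of_ne (Ne.symm h), h]
    rw [this, Matrix.det_diagonal]
    exact Equiv.prod_comp e'.symm a
  rw [hidx, hdet1, Int.natAbs_eq_iff_associated.mpr hassoc, hdet2]
  exact (map_prod Int.natAbsHom a Finset.univ).symm

/-- Let `L` be a full-rank `ℤ`-lattice in an `n`-dimensional real inner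
product space with `L ⊆ L*` (the inner product is integer valued on `L`).
Then for every positive integer `l` the quotient `((1/l)·L*)/L` is finite, of
cardinality `lⁿ · v²` where `v` is the covolume of `L`. -/
theorem card_scaled_dual_lattice_quotient {n : ℕ}
    (L : Submodule ℤ (EuclideanSpace ℝ (Fin n)))
    [DiscreteTopology L] [IsZLattice ℝ L]
    (hLL : ∀ x ∈ L, ∀ y ∈ L, ∃ m : ℤ, ⟪x, y⟫ = (m : ℝ))
    (l : ℕ) (hl : 0 < l) :
    Finite ((scaledDualLattice L l) ⧸
      (Submodule.comap (scaledDualLattice L l).subtype L)) ∧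
    (Nat.card ((scaledDualLattice L l) ⧸
      (Submodule.comap (scaledDualLattice L l).subtype L)) : ℝ)
      = (l : ℝ) ^ n * (ZLattice.covolume L) ^ 2 := by
  classical
  have hfree : Module.Free ℤ L := ZLattice.module_free ℝ L
  have hfin : Module.Finite ℤ L := ZLattice.module_finite ℝ L
  have hrank : Module.finrank ℤ L = n := by
    rw [ZLattice.rank ℝ L, finrank_euclideanSpace_fin]
  let b : Basis (Fin n) ℤ L := (Module.finBasis ℤ L).reindex (finCongr hrank)
  let bE : Basis (Fin n) ℝ (EuclideanSpace ℝ (Fin n)) := b.ofZLatticeBasis ℝ L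
  have hbE : ∀ i, bE i = (b i : EuclideanSpace ℝ (Fin n)) := fun i =>
    b.ofZLatticeBasis_apply ℝ L i
  set B : LinearMap.BilinForm ℝ (EuclideanSpace ℝ (Fin n)) := innerₗ _ with hBdef
  have hBapp : ∀ x y : EuclideanSpace ℝ (Fin n), B x y = ⟪x, y⟫ := fun x y => rfl
  have hB : B.Nondegenerate := by
    refine ⟨fun x hx => ?_, fun x hx => ?_⟩ <;>
      exact inner_self_eq_zero.mp (by rw [← hBapp x x]; exact hx x)
  let dR : Basis (Fin n) ℝ (EuclideanSpace ℝ (Fin n)) := B.dualBasis hB bE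
  have hl0 : (l : ℝ) ≠ 0 := Nat.cast_ne_zero.mpr hl.ne'
  let u : Fin n → ℝˣ := fun _ => (Units.mk0 (l : ℝ) hl0)⁻¹
  let dE : Basis (Fin n) ℝ (EuclideanSpace ℝ (Fin n)) := dR.unitsSMul u
  have hdE : ∀ i, dE i = (l : ℝ)⁻¹ • dR i := by
    intro i
    rw [show dE i = u i • dR i from dR.unitsSMul_apply i, Units.smul_def,
      Units.val_inv_eq_inv_val, Units.val_mk0]
  have hLspan : Submodule.span ℤ (Set.range bE) = L := b.ofZLatticeBasis_span ℝ
  have hdual : B.dualSubmodule L = Submodule.span ℤ (Set.range dR) := by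
    conv_lhs => rw [← hLspan]
    exact B.dualSubmodule_span_of_basis hB bE
  have hmem : ∀ x, x ∈ scaledDualLattice L l ↔ (l : ℝ) • x ∈ B.dualSubmodule L := by
    intro x
    constructor
    · intro hx y hy
      obtain ⟨m, hm⟩ := hx y hy
      refine Submodule.mem_one.mpr ⟨m, ?_⟩
      rw [hBapp, real_inner_smul_left]
      simpa using hm.symm
    · intro hx y hy
      obtain ⟨m, hm⟩ := Submodule.mem_one.mp (hx y hy)
      refine ⟨m, ?_⟩
      rw [hBapp, real_inner_smul_left] at hm
      simpa using hm.symm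
  let eR : EuclideanSpace ℝ (Fin n) ≃ₗ[ℝ] EuclideanSpace ℝ (Fin n) :=
    LinearEquiv.smulOfNeZero ℝ _ ((l : ℝ)⁻¹) (inv_ne_zero hl0)
  let e : EuclideanSpace ℝ (Fin n) ≃ₗ[ℤ] EuclideanSpace ℝ (Fin n) := eR.restrictScalars ℤ
  have he : ∀ x, e x = (l : ℝ)⁻¹ • x := fun x => rfl
  have hesymm : ∀ x, e.symm x = (l : ℝ) • x := by
    intro x
    rw [LinearEquiv.symm_apply_eq, he, smul_smul, inv_mul_cancel₀ hl0, one_smul]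
  have hDspan : scaledDualLattice L l = Submodule.span ℤ (Set.range dE) := by
    have h1 : Submodule.span ℤ (Set.range dE)
        = Submodule.map (e : EuclideanSpace ℝ (Fin n) →ₗ[ℤ] EuclideanSpace ℝ (Fin n)) (Submodule.span ℤ (Set.range dR)) := by
      rw [Submodule.map_span, ← Set.range_comp]
      congr 1
      exact (congrArg Set.range (funext fun i =>
        show (⇑e ∘ ⇑dR) i = dE i from by rw [Function.comp_apply, he, ← hdE])).symm
    ext x
    rw [hmem, hdual, h1]
    simp only [Submodule.mem_map, LinearEquiv.coe_coe]
    constructor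
    · intro hx
      exact ⟨(l : ℝ) • x, hx, by rw [he, smul_smul, inv_mul_cancel₀ hl0, one_smul]⟩
    · rintro ⟨y, hy, rfl⟩
      rw [he, smul_smul, mul_inv_cancel₀ hl0, one_smul]
      exact hy
  have hdEli : LinearIndependent ℤ (dE : Fin n → EuclideanSpace ℝ (Fin n)) := by
    refine dE.linearIndependent.restrict_scalars ?_
    have : (fun r : ℤ => r • (1 : ℝ)) = fun r : ℤ => (r : ℝ) := funext fun r => by simp
    rw [this]
    exact Int.cast_injective
  let dZ0 : Basis (Fin n) ℤ (Submodule.span ℤ (Set.range dE)) := Basis.span hdEli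
  let dZ : Basis (Fin n) ℤ (scaledDualLattice L l) :=
    dZ0.map (LinearEquiv.ofEq _ _ hDspan.symm)
  have hdZ : ∀ i, ((dZ i : scaledDualLattice L l) : EuclideanSpace ℝ (Fin n)) = dE i := by
    intro i
    show ((LinearEquiv.ofEq _ _ hDspan.symm (dZ0 i) : scaledDualLattice L l) :
      EuclideanSpace ℝ (Fin n)) = dE i
    rw [LinearEquiv.coe_ofEq_apply]
    exact congrArg Subtype.val (Basis.span_apply hdEli i)
  have hLle : L ≤ scaledDualLattice L l := by
    intro x hx
    intro y hy
    obtain ⟨m, hm⟩ := hLL x hx y hy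
    exact ⟨l * m, by rw [hm]; push_cast; ring⟩
  let cZ : Basis (Fin n) ℤ (Submodule.comap (scaledDualLattice L l).subtype L) :=
    b.map (Submodule.comapSubtypeEquivOfLe hLle).symm
  have hcZ : ∀ j, ((cZ j : scaledDualLattice L l) : EuclideanSpace ℝ (Fin n)) = bE j := by
    intro j
    have h1 := Submodule.comapSubtypeEquivOfLe_apply_coe hLle (cZ j)
    have h2 : (Submodule.comapSubtypeEquivOfLe hLle) (cZ j) = b j := by
      show (Submodule.comapSubtypeEquivOfLe hLle)
        ((Submodule.comapSubtypeEquivOfLe hLle).symm (b j)) = b j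
      exact (Submodule.comapSubtypeEquivOfLe hLle).apply_symm_apply _
    rw [h2] at h1
    rw [← h1, hbE]
  -- the integer Gram matrix
  have hgex : ∀ i j : Fin n, ∃ m : ℤ, ⟪bE i, bE j⟫ = (m : ℝ) := fun i j => by
    rw [hbE, hbE]; exact hLL _ (b i).2 _ (b j).2
  choose g hg using hgex
  -- coordinates of `bE j` in the basis `dE`
  have hrepr : ∀ i j, dE.repr (bE j) i = (l : ℝ) * (g i j : ℝ) := by
    intro i j
    have h1 : dE.repr (bE j) i = (u i)⁻¹ • dR.repr (bE j) i := dR.repr_unitsSMul u _ i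
    have h2 : dR.repr (bE j) i = B (bE j) (bE i) := B.dualBasis_repr_apply hB bE _ i
    rw [h1, h2, hBapp, real_inner_comm, hg i j]
    show ((((Units.mk0 (l : ℝ) hl0)⁻¹)⁻¹ : ℝˣ) : ℝ) * (g i j : ℝ) = _
    rw [inv_inv]
    rfl
  -- the change of basis matrix is `l` times the Gram matrix
  have hMint : ∀ i j, dZ.repr (cZ j) i = (l : ℤ) * g i j := by
    intro i j
    have hsum : (bE j : EuclideanSpace ℝ (Fin n))
        = ∑ k, ((dZ.repr (cZ j) k : ℤ) : ℝ) • dE k := by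
      rw [← hcZ j]
      conv_lhs => rw [← dZ.sum_repr (cZ j)]
      rw [show (((∑ k, dZ.repr (cZ j) k • dZ k : scaledDualLattice L l)) :
          EuclideanSpace ℝ (Fin n)) = ∑ k, (dZ.repr (cZ j) k • (dZ k : scaledDualLattice L l) :
          scaledDualLattice L l) from by push_cast; rfl]
      rw [AddSubmonoidClass.coe_finset_sum]
      refine Finset.sum_congr rfl fun k _ => ?_
      rw [Submodule.coe_smul, Int.cast_smul_eq_zsmul, hdZ]
    have h1 : dE.repr (bE j) i = ((dZ.repr (cZ j) i : ℤ) : ℝ) := by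
      rw [hsum]
      exact congrFun (dE.repr_sum_self _) i
    have h2 : ((dZ.repr (cZ j) i : ℤ) : ℝ) = (((l : ℤ) * g i j : ℤ) : ℝ) := by
      rw [← h1, hrepr i j]; push_cast; ring
    exact Int.cast_injective h2
  -- determinant computation over ℤ
  have hcard := natCard_quotient_eq_natAbs_det dZ
    (Submodule.comap (scaledDualLattice L l).subtype L) cZ
  have hdetZ : dZ.det ((↑) ∘ cZ) = (l : ℤ) ^ n * (Matrix.of g).det := by
    rw [Basis.det_apply]
    have : dZ.toMatrix ((↑) ∘ cZ) = (l : ℤ) • Matrix.of g := by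
      ext i j
      rw [Basis.toMatrix_apply, Function.comp_apply, hMint]
      simp [Matrix.smul_apply]
    rw [this, Matrix.det_smul, Fintype.card_fin]
  -- covolume computation
  let ob := EuclideanSpace.basisFun (Fin n) ℝ
  let b₀ : Basis (Fin n) ℝ (EuclideanSpace ℝ (Fin n)) := ob.toBasis
  have hvol : (MeasureTheory.volume (ZSpan.fundamentalDomain b₀)).toReal = 1 := by
    rw [MeasureTheory.measure_congr
      (ZSpan.fundamentalDomain_ae_parallelepiped b₀ MeasureTheory.volume)]
    have h2 : parallelepiped (b₀ : Fin n → EuclideanSpace ℝ (Fin n)) = parallelepiped ob :=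
      congrArg _ ob.coe_toBasis
    rw [h2, ob.volume_parallelepiped, ENNReal.toReal_one]
  have hcov : ZLattice.covolume L = |b₀.det ((↑) ∘ b)| := by
    rw [ZLattice.covolume_eq_det_mul_measureReal L MeasureTheory.volume b b₀, MeasureTheory.measureReal_def, hvol, mul_one]
  let A : Matrix (Fin n) (Fin n) ℝ := b₀.toMatrix ((↑) ∘ b)
  have hdetA : b₀.det ((↑) ∘ b) = A.det := b₀.det_apply _
  have hAapp : ∀ k i, A k i = (b i : EuclideanSpace ℝ (Fin n)) k := by
    intro k i
    show b₀.repr ((b i : EuclideanSpace ℝ (Fin n))) k = _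
    rw [ob.coe_toBasis_repr_apply, EuclideanSpace.basisFun_repr]
  have hGram : (Matrix.of g).map (Int.cast : ℤ → ℝ) = A.transpose * A := by
    ext i j
    rw [Matrix.map_apply, Matrix.mul_apply]
    show ((g i j : ℤ) : ℝ) = _
    rw [← hg i j, hbE, hbE]
    have hinner : (inner ℝ (b i : EuclideanSpace ℝ (Fin n)) (b j : EuclideanSpace ℝ (Fin n)) : ℝ)
        = ∑ k, (b i : EuclideanSpace ℝ (Fin n)) k * (b j : EuclideanSpace ℝ (Fin n)) k := by
      simp [PiLp.inner_apply, mul_comm]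
    rw [hinner]
    refine Finset.sum_congr rfl fun k _ => ?_
    rw [Matrix.transpose_apply, hAapp, hAapp]
  have hdetg : ((Matrix.of g).det : ℝ) = A.det ^ 2 := by
    have h1 : ((Matrix.of g).det : ℝ) = ((Matrix.of g).map (Int.cast : ℤ → ℝ)).det := by
      exact RingHom.map_det (Int.castRingHom ℝ) (Matrix.of g)
    rw [h1, hGram, Matrix.det_mul, Matrix.det_transpose, sq]
  -- put everything together
  have hmain : (Nat.card ((scaledDualLattice L l) ⧸
      (Submodule.comap (scaledDualLattice L l).subtype L)) : ℝ)
      = (l : ℝ) ^ n * (ZLattice.covolume L) ^ 2 := by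
    rw [hcard, hdetZ, Nat.cast_natAbs]
    push_cast
    rw [abs_mul, abs_pow, Nat.abs_cast, ← Int.cast_det, hdetg, abs_of_nonneg (sq_nonneg _), hcov, hdetA, sq_abs]
  refine ⟨?_, hmain⟩
  have hne : Nat.card ((scaledDualLattice L l) ⧸
      (Submodule.comap (scaledDualLattice L l).subtype L)) ≠ 0 := by
    intro h
    rw [h] at hmain
    have hpos : 0 < (l : ℝ) ^ n * (ZLattice.covolume L) ^ 2 := by
      have := ZLattice.covolume_pos L (MeasureTheory.volume)
      positivity
    rw [← hmain] at hpos
    simp at hpos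
  exact Nat.finite_of_card_ne_zero hne
end

section
/- Let A be an n × n unitary complex matrix whose characteristic polynomial has real coefficients and for which the multiplicity of −1 as an eigenvalue is even. Let m denote the multiplicity of 1 as an eigenvalue of A. Suppose S is an n × n unitary matrix with S² = A such that every eigenvalue of S is of the form e^{iψ} with 0 ≤ ψ < π. Then n − m is even and det(S) = (−1)^{(n−m)/2}. -/
open Matrix

open Polynomial

private lemma comp_sq_injective (p q : ℂ[X]) (h : p.comp (X ^ 2) = q.comp (X ^ 2)) : p = q := by
  by_contra hne
  have hr : p - q ≠ 0 := sub_ne_zero.mpr hne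
  have hroots : {x : ℂ | (p - q).IsRoot x} = Set.univ := by
    ext y
    simp only [Set.mem_setOf_eq, Set.mem_univ, iff_true]
    obtain ⟨z, hz⟩ := IsAlgClosed.exists_pow_nat_eq y (n := 2) (by norm_num)
    have : ((p - q).comp (X ^ 2)).eval z = 0 := by rw [sub_comp, h, sub_self, eval_zero]
    rwa [eval_comp, eval_pow, eval_X, hz] at this
  have := Polynomial.eq_zero_of_infinite_isRoot (p - q) (by rw [hroots]; exact Set.infinite_univ)
  exact hr this

private lemma charpoly_sq {n : ℕ} (S : Matrix (Fin n) (Fin n) ℂ) :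
    (S ^ 2).charpoly = ((S.charpoly.roots).map (fun μ => X - C (μ ^ 2))).prod := by
  classical
  have hsplit : S.charpoly.Splits := IsAlgClosed.splits _
  have hcard : Multiset.card S.charpoly.roots = n := by
    have := hsplit.natDegree_eq_card_roots
    rw [Matrix.charpoly_natDegree_eq_dim, Fintype.card_fin] at this; exact this.symm
  set R := S.charpoly.roots with hR
  have hfac : S.charpoly = (R.map (fun μ => X - C μ)).prod :=
    hsplit.eq_prod_roots_of_monic (Matrix.charpoly_monic S)
  clear_value R
  -- the ring hom p ↦ p.comp (X^2)
  set φ : ℂ[X] →+* ℂ[X] := Polynomial.compRingHom (X ^ 2) with hφ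
  have hφX : φ X = X ^ 2 := by simp [hφ]
  have hφC : ∀ a : ℂ, φ (C a) = C a := by intro a; simp [hφ]
  -- charmatrix (S^2) mapped by φ
  have hmap : (charmatrix (S ^ 2)).map φ =
      Matrix.scalar (Fin n) ((X : ℂ[X]) ^ 2) - (C : ℂ →+* ℂ[X]).mapMatrix (S ^ 2) := by
    ext i j
    by_cases hij : i = j
    · subst hij
      simp [Matrix.map_apply, charmatrix_apply_eq, hφ, RingHom.mapMatrix_apply]
    · simp [Matrix.map_apply, charmatrix_apply_ne _ _ _ hij, hφ, RingHom.mapMatrix_apply,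
        Matrix.sub_apply, Matrix.scalar_apply, Matrix.diagonal_apply_ne _ hij, Matrix.map_apply]
  -- factorization
  have hcomm : Commute (Matrix.scalar (Fin n) (X : ℂ[X])) ((C : ℂ →+* ℂ[X]).mapMatrix S) :=
    Matrix.scalar_commute _ (fun r' => Commute.all _ _) _
  have hfact : Matrix.scalar (Fin n) ((X : ℂ[X]) ^ 2) - (C : ℂ →+* ℂ[X]).mapMatrix (S ^ 2) =
      (Matrix.scalar (Fin n) (X : ℂ[X]) + (C : ℂ →+* ℂ[X]).mapMatrix S) * charmatrix S := by
    rw [charmatrix, ← Commute.sq_sub_sq hcomm, ← map_pow, ← map_pow]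
  -- left: comp of charpoly
  have hleft : (S ^ 2).charpoly.comp (X ^ 2) =
      ((Matrix.scalar (Fin n) (X : ℂ[X]) + (C : ℂ →+* ℂ[X]).mapMatrix S).det) * S.charpoly := by
    have h1 : (S ^ 2).charpoly.comp (X ^ 2) = φ ((charmatrix (S ^ 2)).det) := by
      rw [Matrix.charpoly]; rfl
    rw [h1, RingHom.map_det, RingHom.mapMatrix_apply, hmap, hfact, det_mul, Matrix.charpoly]
  -- right factor via X ↦ -X
  set ψ : ℂ[X] →+* ℂ[X] := Polynomial.compRingHom (-X) with hψ
  have hmapψ : (charmatrix S).map ψ =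
      -(Matrix.scalar (Fin n) (X : ℂ[X]) + (C : ℂ →+* ℂ[X]).mapMatrix S) := by
    ext i j
    by_cases hij : i = j
    · subst hij
      simp [Matrix.map_apply, charmatrix_apply_eq, hψ, RingHom.mapMatrix_apply]
      ring
    · simp [Matrix.map_apply, charmatrix_apply_ne _ _ _ hij, hψ, RingHom.mapMatrix_apply,
        Matrix.sub_apply, Matrix.scalar_apply, Matrix.diagonal_apply_ne _ hij]
  have hψdet : ψ S.charpoly =
      (-1 : ℂ[X]) ^ n * (Matrix.scalar (Fin n) (X : ℂ[X]) + (C : ℂ →+* ℂ[X]).mapMatrix S).det := by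
    rw [Matrix.charpoly, RingHom.map_det, RingHom.mapMatrix_apply, hmapψ, neg_eq_neg_one_mul,
      det_mul]
    simp [Matrix.det_neg, Fintype.card_fin]
  -- compute ψ S.charpoly via hfac
  have hψprod : ψ S.charpoly = (R.map (fun μ => -X - C μ)).prod := by
    conv_lhs => rw [hfac]
    rw [map_multiset_prod, Multiset.map_map]
    refine congrArg Multiset.prod (Multiset.map_congr rfl fun μ _ => ?_)
    simp [hψ]
  have hright : (Matrix.scalar (Fin n) (X : ℂ[X]) + (C : ℂ →+* ℂ[X]).mapMatrix S).det =
      (R.map (fun μ => X + C μ)).prod := by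
    have h2 : (R.map (fun μ => X + C μ)).prod =
        (-1 : ℂ[X]) ^ n * (R.map (fun μ => -X - C μ)).prod := by
      have h3 : (R.map (fun μ => X + C μ)).prod =
          (R.map (fun μ => (-1 : ℂ[X]) * (-X - C μ))).prod := by
        refine congrArg Multiset.prod (Multiset.map_congr rfl fun μ _ => by ring)
      rw [h3, Multiset.prod_map_mul, Multiset.map_const', Multiset.prod_replicate, hcard]
    rw [h2, ← hψprod, hψdet, ← mul_assoc, ← pow_add]
    have : Even (n + n) := ⟨n, rfl⟩
    rw [this.neg_one_pow, one_mul]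
  -- assemble: comp equality
  have hcompeq : (S ^ 2).charpoly.comp (X ^ 2) =
      ((R.map (fun μ => X - C (μ ^ 2))).prod).comp (X ^ 2) := by
    have hQ : ((R.map (fun μ => X - C (μ ^ 2))).prod).comp (X ^ 2) =
        (R.map (fun μ => (X + C μ) * (X - C μ))).prod := by
      show φ _ = _
      rw [map_multiset_prod, Multiset.map_map]
      refine congrArg Multiset.prod (Multiset.map_congr rfl fun μ _ => ?_)
      simp only [Function.comp_apply, map_sub, map_pow, hφX, hφC]
      ring
    rw [hleft, hright, hQ]
    conv_lhs => rw [hfac]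
    rw [← Multiset.prod_map_mul]
  exact comp_sq_injective _ _ hcompeq

private lemma exp_real_mul_I_inj {a b : ℝ} (hab : |a - b| < 2 * Real.pi)
    (h : Complex.exp (a * Complex.I) = Complex.exp (b * Complex.I)) : a = b := by
  rw [Complex.exp_eq_exp_iff_exists_int] at h
  obtain ⟨k, hk⟩ := h
  have hI : (a : ℂ) = b + k * (2 * Real.pi) := by
    have := hk
    field_simp at this ⊢
    have h2 : ((a : ℂ) - (b + k * (2 * Real.pi))) * Complex.I = 0 := by rw [this]; ring
    rcases mul_eq_zero.mp h2 with h3 | h3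
    · linear_combination h3
    · exact absurd h3 Complex.I_ne_zero
  have hr : a = b + k * (2 * Real.pi) := by exact_mod_cast hI
  have hk0 : k = 0 := by
    by_contra hk0
    have h1 : (1 : ℝ) ≤ |(k : ℝ)| := by
      exact_mod_cast Int.one_le_abs (by exact_mod_cast hk0)
    have hpi : (0 : ℝ) < 2 * Real.pi := by positivity
    have : 2 * Real.pi ≤ |a - b| := by
      rw [hr]
      have : |b + k * (2 * Real.pi) - b| = |(k : ℝ)| * (2 * Real.pi) := by
        rw [show b + k * (2 * Real.pi) - b = (k : ℝ) * (2 * Real.pi) by ring, abs_mul,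
          abs_of_pos hpi]
      rw [this]
      nlinarith
    linarith
  rw [hr, hk0]; simp

private lemma prod_map_exp (M : Multiset ℝ) :
    (M.map (fun θ : ℝ => Complex.exp (θ * Complex.I))).prod = Complex.exp (M.sum * Complex.I) := by
  induction M using Multiset.induction_on with
  | empty => simp
  | cons a s ih => simp [ih, Complex.exp_add, add_mul]

private lemma msum_eq_zero (M : Multiset ℝ) (h : ∀ x ∈ M, x = (0:ℝ)) : M.sum = 0 := by
  induction M using Multiset.induction_on with
  | empty => simp
  | cons a s ih =>
    rw [Multiset.sum_cons, h a (Multiset.mem_cons_self a s), zero_add]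
    exact ih fun x hx => h x (Multiset.mem_cons_of_mem hx)

private lemma sum_map_pi_sub (M : Multiset ℝ) :
    (M.map (fun θ : ℝ => Real.pi - θ)).sum = (Multiset.card M : ℝ) * Real.pi - M.sum := by
  induction M using Multiset.induction_on with
  | empty => simp
  | cons a s ih => simp [ih]; ring


/-- Let `A` be an `n × n` unitary complex matrix whose characteristic
polynomial has real coefficients and for which the multiplicity of `−1` as an
eigenvalue is even.  Let `m` be the multiplicity of `1` as an eigenvalue of
`A`.  If `S` is a unitary matrix with `S² = A` all of whose eigenvalues are of
the form `e^{iψ}` with `0 ≤ ψ < π`, then `n − m` is even and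
`det S = (−1)^{(n−m)/2}`. -/
theorem det_unitary_sqrt {n : ℕ} (A S : Matrix (Fin n) (Fin n) ℂ)
    (hA : A ∈ Matrix.unitaryGroup (Fin n) ℂ)
    (hS : S ∈ Matrix.unitaryGroup (Fin n) ℂ)
    (hSA : S ^ 2 = A)
    (hreal : ∀ k : ℕ, (A.charpoly.coeff k).im = 0)
    (hmult : Even (A.charpoly.rootMultiplicity (-1)))
    (hSeig : ∀ μ : ℂ, S.charpoly.IsRoot μ →
      ∃ ψ : ℝ, 0 ≤ ψ ∧ ψ < Real.pi ∧ μ = Complex.exp (ψ * Complex.I)) :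
    Even (n - A.charpoly.rootMultiplicity 1) ∧
    S.det = (-1 : ℂ) ^ ((n - A.charpoly.rootMultiplicity 1) / 2) := by
  classical
  subst hSA
  set π := Real.pi with hπdef
  have hπ : (0 : ℝ) < π := Real.pi_pos
  -- roots of S
  set R := S.charpoly.roots with hR
  have hsplit : S.charpoly.Splits := IsAlgClosed.splits _
  have hcard : Multiset.card R = n := by
    have := hsplit.natDegree_eq_card_roots
    rw [Matrix.charpoly_natDegree_eq_dim, Fintype.card_fin] at this
    exact this.symm
  -- roots of A = S^2
  have hRA : (S ^ 2).charpoly.roots = R.map (fun μ => μ ^ 2) := by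
    rw [charpoly_sq]
    have hmm : (Multiset.map (fun a => X - C a) (Multiset.map (fun μ => μ ^ 2)
        S.charpoly.roots)) = Multiset.map (fun μ => X - C (μ ^ 2)) S.charpoly.roots := by
      rw [Multiset.map_map]
      rfl
    rw [← hmm, Polynomial.roots_multiset_prod_X_sub_C]
  -- choice of angles
  set Ψ : ℂ → ℝ := fun μ => if h : S.charpoly.IsRoot μ then (hSeig μ h).choose else 0 with hΨdef
  have hΨ : ∀ μ ∈ R, 0 ≤ Ψ μ ∧ Ψ μ < π ∧ μ = Complex.exp (Ψ μ * Complex.I) := by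
    intro μ hμ
    have hroot : S.charpoly.IsRoot μ := Polynomial.isRoot_of_mem_roots hμ
    have := (hSeig μ hroot).choose_spec
    simp only [hΨdef, dif_pos hroot]
    exact this
  set Mψ : Multiset ℝ := R.map Ψ with hMψdef
  have hMψmem : ∀ θ ∈ Mψ, 0 ≤ θ ∧ θ < π := by
    intro θ hθ
    obtain ⟨μ, hμ, rfl⟩ := Multiset.mem_map.mp hθ
    exact ⟨(hΨ μ hμ).1, (hΨ μ hμ).2.1⟩
  have hcardMψ : Multiset.card Mψ = n := by rw [hMψdef, Multiset.card_map, hcard]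
  set f2 : ℝ → ℂ := fun θ => Complex.exp ((2 * θ : ℝ) * Complex.I) with hf2def
  -- roots of A as image of Mψ
  have hRA2 : (S ^ 2).charpoly.roots = Mψ.map f2 := by
    rw [hRA, hMψdef, Multiset.map_map]
    refine Multiset.map_congr rfl fun μ hμ => ?_
    obtain ⟨-, -, hμe⟩ := hΨ μ hμ
    rw [Function.comp_apply, hf2def]
    conv_lhs => rw [hμe]
    rw [← Complex.exp_nat_mul]
    push_cast
    ring_nf
  -- injectivity of f2 on [0, π)
  have hf2inj : ∀ a b : ℝ, 0 ≤ a → a < π → 0 ≤ b → b < π → f2 a = f2 b → a = b := by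
    intro a b ha0 haπ hb0 hbπ h
    have : (2 : ℝ) * a = 2 * b := by
      refine exp_real_mul_I_inj ?_ h
      rw [abs_sub_lt_iff]; constructor <;> nlinarith
    linarith
  -- count transfer
  have hcount : ∀ θ : ℝ, 0 ≤ θ → θ < π →
      ((S ^ 2).charpoly.roots).count (f2 θ) = Mψ.count θ := by
    intro θ h0 hπ'
    rw [hRA2, Multiset.count_map, Multiset.count_eq_card_filter_eq]
    congr 1
    refine Multiset.filter_congr fun a ha => ?_
    obtain ⟨ha0, haπ⟩ := hMψmem a ha
    constructor
    · intro h; exact hf2inj θ a h0 hπ' ha0 haπ h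
    · intro h; rw [h]
  -- conjugation closure of roots of A
  have hconj : ∀ z : ℂ, ((S ^ 2).charpoly.roots).count ((starRingEnd ℂ) z) =
      ((S ^ 2).charpoly.roots).count z := by
    have hmapc : (S ^ 2).charpoly.map (starRingEnd ℂ) = (S ^ 2).charpoly := by
      ext k
      rw [Polynomial.coeff_map]
      exact Complex.conj_eq_iff_im.mpr (hreal k)
    have hsplitA : (S ^ 2).charpoly.Splits := IsAlgClosed.splits _
    have hrm : (S ^ 2).charpoly.roots =
        ((S ^ 2).charpoly.roots).map (starRingEnd ℂ) := by
      conv_lhs => rw [← hmapc]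
      exact hsplitA.roots_map _
    intro z
    conv_lhs => rw [hrm]
    rw [Multiset.count_map_eq_count' _ _ (starRingEnd ℂ).injective]
  -- key symmetry of Mψ counts
  have hkey : ∀ b : ℝ, 0 < b → b < π → Mψ.count (π - b) = Mψ.count b := by
    intro b hb0 hbπ
    have h1 : f2 (π - b) = (starRingEnd ℂ) (f2 b) := by
      rw [hf2def]
      simp only
      rw [← Complex.exp_conj, (starRingEnd ℂ).map_mul, Complex.conj_ofReal, Complex.conj_I]
      rw [show ((2 * (π - b) : ℝ) : ℂ) * Complex.I =
          2 * (Real.pi : ℂ) * Complex.I + ((2 * b : ℝ) : ℂ) * -Complex.I from by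
        rw [hπdef]; push_cast; ring]
      rw [Complex.exp_add, Complex.exp_two_pi_mul_I, one_mul]
    rw [← hcount (π - b) (by linarith) (by linarith), ← hcount b (le_of_lt hb0) hbπ, h1, hconj]
  -- N : the nonzero angles
  set N := Mψ.filter (fun θ => θ ≠ 0) with hNdef
  have hNmem : ∀ θ ∈ N, 0 < θ ∧ θ < π := by
    intro θ hθ
    have h1 := Multiset.of_mem_filter hθ
    obtain ⟨h2, h3⟩ := hMψmem θ (Multiset.mem_of_mem_filter hθ)
    exact ⟨lt_of_le_of_ne h2 (Ne.symm h1), h3⟩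
  set g : ℝ → ℝ := fun θ => π - θ with hgdef
  have hginj : Function.Injective g := fun a b h => by
    simp only [hgdef] at h; linarith
  have hmapN : N.map g = N := by
    ext b
    have hb : b = g (g b) := by simp [hgdef]
    conv_lhs => rw [hb]
    rw [Multiset.count_map_eq_count' g N hginj]
    by_cases hbmem : 0 < b ∧ b < π
    · obtain ⟨hb0, hbπ⟩ := hbmem
      have hgb : g b ≠ 0 := by show π - b ≠ 0; exact ne_of_gt (by linarith)
      have hbne : b ≠ 0 := ne_of_gt hb0
      rw [hNdef, Multiset.count_filter_of_pos (p := fun θ => θ ≠ 0) hgb,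
        Multiset.count_filter_of_pos (p := fun θ => θ ≠ 0) hbne]
      exact hkey b hb0 hbπ
    · rw [Multiset.count_eq_zero_of_notMem, Multiset.count_eq_zero_of_notMem]
      · intro hmem
        obtain ⟨h1, h2⟩ := hNmem b hmem
        exact hbmem ⟨h1, h2⟩
      · intro hmem
        obtain ⟨h1, h2⟩ := hNmem (g b) hmem
        simp only [hgdef] at h1 h2
        exact hbmem ⟨by linarith, by linarith⟩
  -- m and count identities
  have hm1 : (S ^ 2).charpoly.rootMultiplicity 1 = Mψ.count 0 := by
    rw [← Polynomial.count_roots]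
    have : (1 : ℂ) = f2 0 := by simp [hf2def]
    rw [this, hcount 0 le_rfl hπ]
  have hmneg : (S ^ 2).charpoly.rootMultiplicity (-1) = Mψ.count (π / 2) := by
    rw [← Polynomial.count_roots]
    have : (-1 : ℂ) = f2 (π / 2) := by
      rw [hf2def]
      simp only
      rw [show (2 * (π / 2) : ℝ) = π by ring, Complex.exp_pi_mul_I]
    rw [this, hcount (π / 2) (by linarith) (by linarith)]
  -- cardinalities
  have hsplit0 : Mψ.filter (fun θ => θ = 0) + N = Mψ := by
    rw [hNdef]
    exact Multiset.filter_add_not _ _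
  have hcount0 : Multiset.card (Mψ.filter (fun θ => θ = 0)) = Mψ.count 0 := by
    rw [Multiset.count_eq_card_filter_eq]
    congr 1
    exact Multiset.filter_congr fun a _ => by constructor <;> (intro h; exact h.symm)
  have hcardN : Mψ.count 0 + Multiset.card N = n := by
    have := congrArg Multiset.card hsplit0
    rw [Multiset.card_add, hcount0] at this
    rw [this, hcardMψ]
  -- parity of card N
  have hcountN : N.count (π / 2) = Mψ.count (π / 2) := by
    rw [hNdef, Multiset.count_filter_of_pos (p := fun θ => θ ≠ 0)
      (by positivity : (π / 2 : ℝ) ≠ 0)]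
  set N' := N.filter (fun θ => θ ≠ π / 2) with hN'def
  have hsplitN : N.filter (fun θ => θ = π / 2) + N' = N := by
    rw [hN'def]; exact Multiset.filter_add_not _ _
  have hcardN' : N.count (π / 2) + Multiset.card N' = Multiset.card N := by
    have := congrArg Multiset.card hsplitN
    rw [Multiset.card_add] at this
    rw [← this]
    congr 1
    rw [Multiset.count_eq_card_filter_eq]
    congr 1
    exact Multiset.filter_congr fun a _ => by constructor <;> (intro h; exact h.symm)
  have hmapN' : N'.map g = N' := by
    rw [hN'def]
    have hpg : N.filter (fun θ => θ ≠ π / 2) = N.filter ((fun θ => θ ≠ π / 2) ∘ g) := by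
      refine Multiset.filter_congr fun a _ => ?_
      simp only [hgdef, Function.comp_apply]
      constructor
      · intro h hc; exact h (by linarith)
      · intro h hc; exact h (by rw [hc]; ring)
    conv_lhs => rw [hpg]
    rw [← Multiset.filter_map, hmapN]
  have hcardN'even : Multiset.card N' = 2 * Multiset.card (N'.filter (fun θ => θ < π / 2)) := by
    have hsplitN' : N'.filter (fun θ => θ < π / 2) + N'.filter (fun θ => ¬ θ < π / 2) = N' :=
      Multiset.filter_add_not _ _
    have hG : N'.filter (fun θ => ¬ θ < π / 2) = (N'.filter (fun θ => θ < π / 2)).map g := by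
      conv_lhs => rw [← hmapN']
      rw [Multiset.filter_map]
      congr 1
      refine Multiset.filter_congr fun a ha => ?_
      have hane : a ≠ π / 2 := (Multiset.mem_filter.mp ha).2
      simp only [hgdef, Function.comp_apply, not_lt]
      constructor
      · intro h
        rcases lt_or_eq_of_le (by linarith : a ≤ π / 2) with h2 | h2
        · exact h2
        · exact absurd h2 hane
      · intro h; linarith
    have := congrArg Multiset.card hsplitN'
    rw [Multiset.card_add, hG, Multiset.card_map] at this
    omega
  have hfinal1 : n - (S ^ 2).charpoly.rootMultiplicity 1 = Multiset.card N := by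
    rw [hm1]; omega
  have hevenN : Even (Multiset.card N) := by
    obtain ⟨r, hr2⟩ := hmult
    rw [hmneg] at hr2
    exact ⟨r + Multiset.card (N'.filter (fun θ => θ < π / 2)), by omega⟩
  refine ⟨hfinal1 ▸ hevenN, ?_⟩
  -- determinant computation
  have hRE : Mψ.map (fun θ : ℝ => Complex.exp ((θ : ℝ) * Complex.I)) = R := by
    rw [hMψdef, Multiset.map_map]
    conv_rhs => rw [← Multiset.map_id R]
    exact Multiset.map_congr rfl fun μ hμ => ((hΨ μ hμ).2.2).symm
  have hdet : S.det = Complex.exp ((Mψ.sum : ℝ) * Complex.I) := by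
    rw [Matrix.det_eq_prod_roots_charpoly, ← hR, ← hRE, prod_map_exp]
  have hMψsum : Mψ.sum = N.sum := by
    conv_lhs => rw [← hsplit0]
    rw [Multiset.sum_add,
      msum_eq_zero _ (fun x hx => (Multiset.mem_filter.mp hx).2), zero_add]
  have hNsum : N.sum = (Multiset.card N : ℝ) * π / 2 := by
    have h2 := congrArg Multiset.sum hmapN
    rw [hgdef, hπdef] at h2
    rw [sum_map_pi_sub] at h2
    rw [hπdef]
    linarith
  obtain ⟨r, hrN⟩ := hevenN
  have hq : (n - (S ^ 2).charpoly.rootMultiplicity 1) / 2 = r := by omega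
  rw [hdet, hq]
  have hsum2 : (Mψ.sum : ℝ) = (r : ℝ) * Real.pi := by
    rw [hMψsum, hNsum, hrN, hπdef]; push_cast; ring
  rw [hsum2]
  rw [show (((r : ℝ) * Real.pi : ℝ) : ℂ) * Complex.I = ((r : ℕ) : ℂ) * ((Real.pi : ℂ) * Complex.I)
    from by push_cast; ring]
  rw [Complex.exp_nat_mul, Complex.exp_pi_mul_I]
end
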